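/- arXiv:2006.04420 — 2 statements merged into one kernel-verified Lean document; each statement's English description precedes it below -/
import Mathlib

section
/- Let n ≥ 1, let M be a fixed n×n real matrix, let v, u ∈ ℝⁿ be fixed vectors, and let A₀ be an n×n real matrix such that I + A₀ is invertible. Set B = (I + A₀)⁻¹ and D = det(I + A₀). Then the map h(A) = ⟨M·(I + A)⁻¹·v, u⟩ · det(I + A), from n×n real matrices to ℝ, is Fréchet differentiable at A₀, with derivative H ↦ ( −⟨M·B·H·B·v, u⟩ + ⟨M·B·v, u⟩ · tr(B·H) ) · D. -/
attribute [local instance] Matrix.frobeniusNormedAddCommGroup Matrix.frobeniusNormedSpace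

open scoped Matrix

/-!
The map is `A ↦ ℓ (1 + A)⁻¹ * det (1 + A)` for the linear functional `ℓ X = ⟨M X v, u⟩`, so the
product rule applies. Inversion has derivative `H ↦ -X⁻¹ H X⁻¹` at an invertible `X`. The
determinant is multilinear in the rows, so its derivative at `X` is the sum of the determinants of
`X` with one row replaced by the corresponding row of `H`; by Cramer's rule that sum is
`tr (adj X * H)` (Jacobi's formula), and `adj X = det X • X⁻¹` gives the stated form.
-/

namespace Matrix

variable {R 𝕜 ι : Type*} [Fintype ι] [DecidableEq ι]

section CommRing

variable [CommRing R]

theorem det_updateRow_eq_sum_adjugate_mul (A : Matrix ι ι R) (i : ι) (b : ι → R) :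
    (A.updateRow i b).det = ∑ j, A.adjugate j i * b j := by
  rw [← cramer_transpose_apply, cramer_eq_adjugate_mulVec, ← adjugate_transpose]
  rfl

theorem sum_det_updateRow_eq_trace_adjugate_mul (A H : Matrix ι ι R) :
    ∑ i, (A.updateRow i (H i)).det = (A.adjugate * H).trace := by
  simp only [det_updateRow_eq_sum_adjugate_mul, trace, diag, mul_apply]
  exact Finset.sum_comm

end CommRing

section NormedField

variable [NontriviallyNormedField 𝕜]

def detRowContinuousMultilinear : ContinuousMultilinearMap 𝕜 (fun _ : ι => ι → 𝕜) 𝕜 :=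
  { detRowAlternating.toMultilinearMap with
    cont := (continuous_id (X := ι → ι → 𝕜)).matrix_det }

variable [CompleteSpace 𝕜]

def traceMulLeftCLM (A : Matrix ι ι 𝕜) : Matrix ι ι 𝕜 →L[𝕜] 𝕜 :=
  LinearMap.toContinuousLinearMap (traceLinearMap ι 𝕜 𝕜 ∘ₗ LinearMap.mulLeft 𝕜 A)

@[simp]
theorem traceMulLeftCLM_apply (A H : Matrix ι ι 𝕜) : traceMulLeftCLM A H = (A * H).trace := rfl

theorem hasFDerivAt_det (A : Matrix ι ι 𝕜) :
    HasFDerivAt det (traceMulLeftCLM A.adjugate) A := by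
  let E := (ofLinearEquiv 𝕜 : (ι → ι → 𝕜) ≃ₗ[𝕜] Matrix ι ι 𝕜).symm.toContinuousLinearEquiv
  refine ((detRowContinuousMultilinear.hasFDerivAt (E A)).comp A E.hasFDerivAt).congr_fderiv ?_
  ext H
  exact (detRowContinuousMultilinear.linearDeriv_apply _ _).trans
    (sum_det_updateRow_eq_trace_adjugate_mul A H)

end NormedField

section RCLike

variable [RCLike 𝕜]

attribute [local instance] frobeniusNormedRing frobeniusNormedAlgebra

open ContinuousLinearMap

theorem hasFDerivAt_inv {A : Matrix ι ι 𝕜} (hA : IsUnit A) :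
    HasFDerivAt (fun X : Matrix ι ι 𝕜 => X⁻¹) (-mulLeftRight 𝕜 _ A⁻¹ A⁻¹) A := by
  have h := hasFDerivAt_ringInverse (𝕜 := 𝕜) hA.unit
  rw [coe_units_inv, hA.unit_spec] at h
  simpa only [nonsing_inv_eq_ringInverse] using h

theorem hasFDerivAt_inv_mul_det (ℓ : Matrix ι ι 𝕜 →L[𝕜] 𝕜) {A : Matrix ι ι 𝕜} (hA : IsUnit A) :
    ∃ f' : Matrix ι ι 𝕜 →L[𝕜] 𝕜, HasFDerivAt (fun X => ℓ X⁻¹ * X.det) f' A ∧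
      ∀ H, f' H = A.det * (ℓ A⁻¹ * (A⁻¹ * H).trace - ℓ (A⁻¹ * H * A⁻¹)) := by
  refine ⟨_, (ℓ.hasFDerivAt.comp A (hasFDerivAt_inv hA)).mul (hasFDerivAt_det A), fun H => ?_⟩
  have hadj : A.adjugate = A.det • A⁻¹ := by
    rw [inv_def, smul_smul, Ring.mul_inverse_cancel _ ((isUnit_iff_isUnit_det A).mp hA), one_smul]
  -- the derivative mixes the Frobenius ring instances with the default module instances on
  -- matrices, across which the `ContinuousLinearMap` application lemmas do not fire
  change ℓ A⁻¹ * traceMulLeftCLM A.adjugate H + A.det * ℓ (-(A⁻¹ * H * A⁻¹)) = _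
  rw [traceMulLeftCLM_apply, hadj, smul_mul_assoc, trace_smul, smul_eq_mul, map_neg]
  ring

end RCLike

end Matrix

theorem hasFDerivAt_mulVec_inner_det_general
    (n : ℕ) (M A₀ : Matrix (Fin n) (Fin n) ℝ)
    (v u : Fin n → ℝ)
    (h : IsUnit (1 + A₀))
    (B : Matrix (Fin n) (Fin n) ℝ) (hB : B = (1 + A₀)⁻¹)
    (D : ℝ) (hD : D = (1 + A₀).det) :
    ∃ f' : Matrix (Fin n) (Fin n) ℝ →L[ℝ] ℝ,
      HasFDerivAt
        (fun A : Matrix (Fin n) (Fin n) ℝ =>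
          (((M * (1 + A)⁻¹) *ᵥ v) ⬝ᵥ u) * (1 + A).det) f' A₀ ∧
      ∀ H : Matrix (Fin n) (Fin n) ℝ,
        f' H = (-(((M * B * H * B) *ᵥ v) ⬝ᵥ u)
                + (((M * B) *ᵥ v) ⬝ᵥ u) * (B * H).trace) * D := by
  let ℓ : Matrix (Fin n) (Fin n) ℝ →L[ℝ] ℝ := LinearMap.toContinuousLinearMap
    { toFun := fun X => ((M * X) *ᵥ v) ⬝ᵥ u
      map_add' := fun X Y => by simp only [Matrix.mul_add, Matrix.add_mulVec, add_dotProduct]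
      map_smul' := fun r X => by
        simp only [Matrix.mul_smul, Matrix.smul_mulVec, smul_dotProduct, RingHom.id_apply] }
  obtain ⟨f', hf', hf'_apply⟩ := Matrix.hasFDerivAt_inv_mul_det ℓ h
  refine ⟨_, hf'.comp A₀ ((hasFDerivAt_id A₀).const_add 1), fun H => ?_⟩
  subst hB hD
  change f' H = _
  rw [hf'_apply]
  change (1 + A₀).det * (((M * (1 + A₀)⁻¹) *ᵥ v ⬝ᵥ u) * ((1 + A₀)⁻¹ * H).trace
    - (M * ((1 + A₀)⁻¹ * H * (1 + A₀)⁻¹)) *ᵥ v ⬝ᵥ u) = _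
  simp only [Matrix.mul_assoc]
  ring

/-- The map `A ↦ ⟨M (I+A)⁻¹ v, u⟩ ⬝ det (I+A)` (Euclidean inner product on `ℝⁿ`)
is Fréchet differentiable at any `A₀` with `I + A₀` invertible, with derivative
`H ↦ (−⟨M B H B v, u⟩ + ⟨M B v, u⟩ tr (B H)) D`,
where `B = (I + A₀)⁻¹` and `D = det (I + A₀)`. -/
theorem hasFDerivAt_mulVec_inner_det
    (n : ℕ) (hn : 1 ≤ n) (M A₀ : Matrix (Fin n) (Fin n) ℝ)
    (v u : Fin n → ℝ)
    (h : IsUnit (1 + A₀))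
    (B : Matrix (Fin n) (Fin n) ℝ) (hB : B = (1 + A₀)⁻¹)
    (D : ℝ) (hD : D = (1 + A₀).det) :
    ∃ f' : Matrix (Fin n) (Fin n) ℝ →L[ℝ] ℝ,
      HasFDerivAt
        (fun A : Matrix (Fin n) (Fin n) ℝ =>
          (((M * (1 + A)⁻¹) *ᵥ v) ⬝ᵥ u) * (1 + A).det) f' A₀ ∧
      ∀ H : Matrix (Fin n) (Fin n) ℝ,
        f' H = (-(((M * B * H * B) *ᵥ v) ⬝ᵥ u)
                + (((M * B) *ᵥ v) ⬝ᵥ u) * (B * H).trace) * D :=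
  hasFDerivAt_mulVec_inner_det_general n M A₀ v u h B hB D hD
end

section
/- Let d ≥ 1, let Ω ⊆ ℝ^d be a Lebesgue-measurable set, and let F : ℝ^d → ℝ^d be injective on Ω such that at every x ∈ Ω, F has derivative within Ω equal to the invertible d×d matrix DF(x) with det DF(x) > 0. Let u : ℝ^d → ℝ^d be differentiable at every point of F(Ω) with derivative Du, and set v = u ∘ F. Then ∫_{F(Ω)} ‖Du(y)‖_F² dy = ∫_Ω ‖Dv(x) · (DF(x))⁻¹‖_F² · det(DF(x)) dx, where Dv(x) denotes the matrix of the derivative of v within Ω at x (which exists by the chain rule). -/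
/-! The change-of-variables formula turns the left side into `∫_Ω ‖Du(F x)‖_F² |det DF x|`.
Since a derivative within a set is unique at its Lebesgue density points, the chain rule gives
`Dv = Du(F ·) · DF` almost everywhere on `Ω`, so `Dv (DF)⁻¹ = Du ∘ F` almost everywhere. -/

open MeasureTheory

noncomputable def frobNorm {d : ℕ} (X : Matrix (Fin d) (Fin d) ℝ) : ℝ :=
  Real.sqrt (∑ i, ∑ j, (X i j) ^ 2)

theorem Matrix.det_toEuclideanCLM {𝕜 n : Type*} [RCLike 𝕜] [Fintype n] [DecidableEq n]
    (A : Matrix n n 𝕜) : (Matrix.toEuclideanCLM (𝕜 := 𝕜) A).det = A.det := by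
  change LinearMap.det ((Matrix.toEuclideanCLM (𝕜 := 𝕜) A : EuclideanSpace 𝕜 n →L[𝕜] _) :
    EuclideanSpace 𝕜 n →ₗ[𝕜] _) = A.det
  rw [Matrix.coe_toEuclideanCLM_eq_toEuclideanLin, Matrix.toEuclideanLin_eq_toLin_orthonormal,
    LinearMap.det_toLin]

theorem ae_restrict_eq_of_hasFDerivWithinAt {E : Type*} [NormedAddCommGroup E]
    [NormedSpace ℝ E] [FiniteDimensional ℝ E] [MeasurableSpace E] [BorelSpace E]
    (μ : Measure E) [μ.IsAddHaarMeasure] {f : E → E} {f' g' : E → E →L[ℝ] E} {s : Set E}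
    (hs : MeasurableSet s) (hf' : ∀ x ∈ s, HasFDerivWithinAt f (f' x) s x)
    (hg' : ∀ x ∈ s, HasFDerivWithinAt f (g' x) s x) : f' =ᵐ[μ.restrict s] g' := by
  have hzero : ApproximatesLinearOn (fun x ↦ f x - f x) (0 : E →L[ℝ] E) s 0 := by
    intro x _ y _
    simp
  filter_upwards [hzero.norm_fderiv_sub_le μ hs (f' - g') fun x hx ↦ (hf' x hx).sub (hg' x hx)]
    with x hx
  simpa [sub_eq_zero] using hx

theorem integral_image_frobNorm_sq_eq_general
    (d : ℕ)
    (Ω : Set (EuclideanSpace ℝ (Fin d))) (hΩ : MeasurableSet Ω)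
    (F : EuclideanSpace ℝ (Fin d) → EuclideanSpace ℝ (Fin d))
    (DF : EuclideanSpace ℝ (Fin d) → Matrix (Fin d) (Fin d) ℝ)
    (hinj : Set.InjOn F Ω)
    (hF : ∀ x ∈ Ω, HasFDerivWithinAt F (Matrix.toEuclideanCLM (𝕜 := ℝ) (DF x)) Ω x)
    (hdet : ∀ x ∈ Ω, 0 < (DF x).det)
    (u : EuclideanSpace ℝ (Fin d) → EuclideanSpace ℝ (Fin d))
    (Du : EuclideanSpace ℝ (Fin d) → Matrix (Fin d) (Fin d) ℝ)
    (hu : ∀ y ∈ F '' Ω, HasFDerivAt u (Matrix.toEuclideanCLM (𝕜 := ℝ) (Du y)) y)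
    (v : EuclideanSpace ℝ (Fin d) → EuclideanSpace ℝ (Fin d)) (hv : v = u ∘ F)
    (Dv : EuclideanSpace ℝ (Fin d) → Matrix (Fin d) (Fin d) ℝ)
    (hDv : ∀ x ∈ Ω, HasFDerivWithinAt v (Matrix.toEuclideanCLM (𝕜 := ℝ) (Dv x)) Ω x) :
    ∫ y in F '' Ω, (frobNorm (Du y)) ^ 2
      = ∫ x in Ω, (frobNorm (Dv x * (DF x)⁻¹)) ^ 2 * (DF x).det := by
  have hchain : ∀ x ∈ Ω, HasFDerivWithinAt v
      (Matrix.toEuclideanCLM (𝕜 := ℝ) (Du (F x) * DF x)) Ω x := fun x hx ↦ by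
    rw [hv, map_mul]
    exact (hu (F x) ⟨x, hx, rfl⟩).comp_hasFDerivWithinAt x (hF x hx)
  have hDv_ae := ae_restrict_eq_of_hasFDerivWithinAt volume hΩ hDv hchain
  rw [integral_image_eq_integral_abs_det_fderiv_smul volume hΩ hF hinj]
  refine integral_congr_ae ?_
  filter_upwards [hDv_ae, ae_restrict_mem hΩ] with x hx hxΩ
  have hDFx := hdet x hxΩ
  rw [Matrix.toEuclideanCLM.injective hx, Matrix.mul_nonsing_inv_cancel_right _ _
    hDFx.ne'.isUnit, Matrix.det_toEuclideanCLM, abs_of_pos hDFx, smul_eq_mul, mul_comm]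

/-- Pullback of the energy-dissipation integrand: for `F` injective on `Ω` with
invertible derivative matrices `DF x` (`det DF x > 0`), and `u` differentiable on
`F '' Ω` with derivative matrix `Du`, the composition `v = u ∘ F` has derivative
matrix `Dv` within `Ω` and
`∫_{F(Ω)} ‖Du‖_F² = ∫_Ω ‖Dv (DF)⁻¹‖_F² det (DF)`. -/
theorem integral_image_frobNorm_sq_eq
    (d : ℕ) (hd : 1 ≤ d)
    (Ω : Set (EuclideanSpace ℝ (Fin d))) (hΩ : MeasurableSet Ω)
    (F : EuclideanSpace ℝ (Fin d) → EuclideanSpace ℝ (Fin d))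
    (DF : EuclideanSpace ℝ (Fin d) → Matrix (Fin d) (Fin d) ℝ)
    (hinj : Set.InjOn F Ω)
    (hF : ∀ x ∈ Ω, HasFDerivWithinAt F (Matrix.toEuclideanCLM (𝕜 := ℝ) (DF x)) Ω x)
    (hDFinv : ∀ x ∈ Ω, IsUnit (DF x))
    (hdet : ∀ x ∈ Ω, 0 < (DF x).det)
    (u : EuclideanSpace ℝ (Fin d) → EuclideanSpace ℝ (Fin d))
    (Du : EuclideanSpace ℝ (Fin d) → Matrix (Fin d) (Fin d) ℝ)
    (hu : ∀ y ∈ F '' Ω, HasFDerivAt u (Matrix.toEuclideanCLM (𝕜 := ℝ) (Du y)) y)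
    (v : EuclideanSpace ℝ (Fin d) → EuclideanSpace ℝ (Fin d)) (hv : v = u ∘ F)
    (Dv : EuclideanSpace ℝ (Fin d) → Matrix (Fin d) (Fin d) ℝ)
    (hDv : ∀ x ∈ Ω, HasFDerivWithinAt v (Matrix.toEuclideanCLM (𝕜 := ℝ) (Dv x)) Ω x) :
    ∫ y in F '' Ω, (frobNorm (Du y)) ^ 2
      = ∫ x in Ω, (frobNorm (Dv x * (DF x)⁻¹)) ^ 2 * (DF x).det :=
  integral_image_frobNorm_sq_eq_general d Ω hΩ F DF hinj hF hdet u Du hu v hv Dv hDv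
end
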